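/- (Optimality of linear codes under extension, prime case) Let d be prime and E ⊆ (Z_d)^m closed under multiplication by nonzero scalars. Let C ⊆ (Z_d)^m be an additive subgroup that detects E (no nonzero difference of codewords lies in E). If c ∉ C is such that C ∪ {c} still detects E, then the subgroup generated by C and c also detects E. -/
import Mathlib


/-- A set of codewords `C` detects the error set `E` if no difference of two
distinct codewords lies in `E`. -/
def Detects {d m : ℕ} (C : Set (Fin m → ZMod d)) (E : Set (Fin m → ZMod d)) : Prop :=
  ∀ x ∈ C, ∀ y ∈ C, x ≠ y → x - y ∉ E

theorem stmt10 (d : ℕ) (hd : d.Prime) (m : ℕ) (E : Set (Fin m → ZMod d))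
    (hE : ∀ e ∈ E, ∀ q : ZMod d, q ≠ 0 → q • e ∈ E) (h0E : (0 : Fin m → ZMod d) ∉ E)
    (C : AddSubgroup (Fin m → ZMod d)) (hC : Detects (C : Set (Fin m → ZMod d)) E)
    (c : Fin m → ZMod d) (hcC : c ∉ C)
    (hext : Detects ((C : Set (Fin m → ZMod d)) ∪ {c}) E) :
    Detects ((AddSubgroup.closure ((C : Set (Fin m → ZMod d)) ∪ {c}) :
      AddSubgroup (Fin m → ZMod d)) : Set (Fin m → ZMod d)) E := by
  haveI : Fact d.Prime := ⟨hd⟩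
  haveI : NeZero d := ⟨hd.pos.ne'⟩
  have hmem : ∀ x ∈ AddSubgroup.closure ((C : Set (Fin m → ZMod d)) ∪ {c}),
      ∃ a ∈ C, ∃ q : ZMod d, x = a + q • c := by
    intro x hx
    rw [AddSubgroup.closure_union, AddSubgroup.closure_eq, AddSubgroup.mem_sup] at hx
    obtain ⟨a, ha, b, hb, rfl⟩ := hx
    rw [AddSubgroup.mem_closure_singleton] at hb
    obtain ⟨n, rfl⟩ := hb
    exact ⟨a, ha, (n : ZMod d), by rw [Int.cast_smul_eq_zsmul]⟩
  have hsmul : ∀ q : ZMod d, ∀ a ∈ C, q • a ∈ C := by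
    intro q a ha
    have h1 : q • a = (q.val : ZMod d) • a := by rw [ZMod.natCast_val, ZMod.cast_id]
    rw [h1, Nat.cast_smul_eq_nsmul]
    exact AddSubgroup.nsmul_mem C ha q.val
  intro x hx y hy hne hxyE
  obtain ⟨a, ha, q, rfl⟩ := hmem x hx
  obtain ⟨b, hb, r, rfl⟩ := hmem y hy
  have key : (a + q • c) - (b + r • c) = (a - b) + (q - r) • c := by
    rw [sub_smul]; abel
  rw [key] at hxyE
  by_cases hqr : q = r
  · subst hqr
    rw [sub_self, zero_smul, add_zero] at hxyE
    have hab : a ≠ b := by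
      intro h; exact hne (by rw [h])
    exact hC a ha b hb hab hxyE
  · set s := q - r with hs
    have hs0 : s ≠ 0 := sub_ne_zero.mpr hqr
    have h2 : s⁻¹ • ((a - b) + s • c) ∈ E := hE _ hxyE s⁻¹ (inv_ne_zero hs0)
    have h3 : s⁻¹ • ((a - b) + s • c) = s⁻¹ • (a - b) + c := by
      rw [smul_add, smul_smul, inv_mul_cancel₀ hs0, one_smul]
    rw [h3] at h2
    set t := s⁻¹ • (a - b) with ht
    have htC : t ∈ C := hsmul _ _ (AddSubgroup.sub_mem C ha hb)
    have hne' : c ≠ -t := by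
      intro h
      exact hcC (h ▸ AddSubgroup.neg_mem C htC)
    have := hext c (Or.inr rfl) (-t) (Or.inl (AddSubgroup.neg_mem C htC)) hne'
    apply this
    rw [sub_neg_eq_add, add_comm]
    exact h2
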